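/- Let L ∈ {ALC, ALCI} and let E = (E⁺, E⁻) be a collection of labeled ABox-AQ examples. Then the following are equivalent: (1) E admits a fitting L-ontology; (2) there is a completion C for E such that (a) for all (A, Q(a)) ∈ E⁺: if h is a homomorphism from A to C then Q(h(a)) ∈ C, and (b) for all (A, Q(a)) ∈ E⁻: Q(a) ∉ C. -/

import Mathlib

/-!
Formalization background for "Fitting Ontologies to ABox-Query Examples":
description logics ALC / ALCI / ALCQ, ABoxes, interpretations (with standard
names assumption), ontologies, queries (AQ / CQ / full CQ / UCQ), fitting
problems, homomorphisms, forest models, unravelings, etc.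
-/

namespace DLFit

/-- Roles: role names and inverse roles (both indexed by natural numbers). -/
inductive DLRole : Type
  | name (r : ℕ)
  | inv (r : ℕ)
deriving DecidableEq

/-- Concepts of ALCIQ, a common superlanguage of ALC, ALCI and ALCQ. -/
inductive Concept : Type
  | top
  | atom (A : ℕ)
  | neg (C : Concept)
  | inter (C D : Concept)
  | ex (r : DLRole) (C : Concept)
  | atLeast (n : ℕ) (r : DLRole) (C : Concept)
  | atMost (n : ℕ) (r : DLRole) (C : Concept)
deriving DecidableEq

/-- A concept uses no inverse roles. -/
def Concept.invFree : Concept → Prop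
  | .top => True
  | .atom _ => True
  | .neg C => C.invFree
  | .inter C D => C.invFree ∧ D.invFree
  | .ex r C => (∃ m, r = DLRole.name m) ∧ C.invFree
  | .atLeast _ r C => (∃ m, r = DLRole.name m) ∧ C.invFree
  | .atMost _ r C => (∃ m, r = DLRole.name m) ∧ C.invFree

/-- A concept uses no qualified number restrictions. -/
def Concept.countFree : Concept → Prop
  | .top => True
  | .atom _ => True
  | .neg C => C.countFree
  | .inter C D => C.countFree ∧ D.countFree
  | .ex _ C => C.countFree
  | .atLeast _ _ _ => False
  | .atMost _ _ _ => False

/-- An ontology is a finite set of concept inclusions `C ⊑ D`. -/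
abbrev Ontology := Finset (Concept × Concept)

/-- The two ontology languages considered: ALC and ALCI. -/
inductive DL : Type
  | alc
  | alci
deriving DecidableEq

/-- Membership of an ontology in ALC resp. ALCI. -/
def OntologyInLang : DL → Ontology → Prop
  | .alc, O => ∀ ci ∈ O, ci.1.invFree ∧ ci.1.countFree ∧ ci.2.invFree ∧ ci.2.countFree
  | .alci, O => ∀ ci ∈ O, ci.1.countFree ∧ ci.2.countFree

/-- An ALCQ-ontology: no inverse roles (number restrictions allowed). -/
def OntologyIsALCQ (O : Ontology) : Prop := ∀ ci ∈ O, ci.1.invFree ∧ ci.2.invFree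

/-- ABox assertions `A(a)` and `r(a,b)`. -/
inductive Assertion : Type
  | conc (A : ℕ) (a : ℕ)
  | role (r : ℕ) (a b : ℕ)
deriving DecidableEq

/-- An ABox is a finite set of assertions. -/
abbrev ABox := Finset Assertion

def AssertionInds : Assertion → Finset ℕ
  | .conc _ a => {a}
  | .role _ a b => {a, b}

/-- The individual names occurring in an ABox. -/
def ABoxInds (A : ABox) : Finset ℕ := A.biUnion AssertionInds

def AssertionCNs : Assertion → Finset ℕ
  | .conc P _ => {P}
  | .role _ _ _ => ∅

/-- The concept names occurring in an ABox. -/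
def ABoxCNs (A : ABox) : Finset ℕ := A.biUnion AssertionCNs

/-- An interpretation, with the standard names assumption: every individual
name denotes itself, i.e. the (injective) map `indI` embeds the individual
names into the domain. -/
structure Interp : Type 1 where
  Dom : Type
  indI : ℕ → Dom
  indI_inj : Function.Injective indI
  concI : ℕ → Set Dom
  roleI : ℕ → Set (Dom × Dom)

/-- Semantics of (possibly inverse) roles. -/
def Interp.rSem (I : Interp) : DLRole → Set (I.Dom × I.Dom)
  | .name r => I.roleI r
  | .inv r => {p | (p.2, p.1) ∈ I.roleI r}

/-- Semantics of concepts. -/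
def Interp.cSem (I : Interp) : Concept → Set I.Dom
  | .top => Set.univ
  | .atom A => I.concI A
  | .neg C => (I.cSem C)ᶜ
  | .inter C D => I.cSem C ∩ I.cSem D
  | .ex r C => {d | ∃ e, (d, e) ∈ I.rSem r ∧ e ∈ I.cSem C}
  | .atLeast n r C => {d | (n : ℕ∞) ≤ {e | (d, e) ∈ I.rSem r ∧ e ∈ I.cSem C}.encard}
  | .atMost n r C => {d | {e | (d, e) ∈ I.rSem r ∧ e ∈ I.cSem C}.encard ≤ (n : ℕ∞)}

/-- `I` is a model of the ontology `O`. -/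
def Interp.IsModelOf (I : Interp) (O : Ontology) : Prop :=
  ∀ ci ∈ O, I.cSem ci.1 ⊆ I.cSem ci.2

def Interp.SatAssertion (I : Interp) : Assertion → Prop
  | .conc P a => I.indI a ∈ I.concI P
  | .role r a b => (I.indI a, I.indI b) ∈ I.roleI r

/-- `I` is a model of the ABox `A` (individual names interpreted as themselves). -/
def Interp.SatABox (I : Interp) (A : ABox) : Prop := ∀ α ∈ A, I.SatAssertion α

/-- An ABox is consistent with an ontology if they have a common model. -/
def ConsistentWith (A : ABox) (O : Ontology) : Prop :=
  ∃ I : Interp, I.IsModelOf O ∧ I.SatABox A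

/-- Homomorphism between ABoxes (need not fix individual names). -/
def ABoxHom (h : ℕ → ℕ) (A B : ABox) : Prop :=
  (∀ P a, Assertion.conc P a ∈ A → Assertion.conc P (h a) ∈ B) ∧
  (∀ r a b, Assertion.role r a b ∈ A → Assertion.role r (h a) (h b) ∈ B)

/-- Homomorphism from an ABox into an interpretation. -/
def ABoxIHom (I : Interp) (h : ℕ → I.Dom) (A : ABox) : Prop :=
  (∀ P a, Assertion.conc P a ∈ A → h a ∈ I.concI P) ∧
  (∀ r a b, Assertion.role r a b ∈ A → (h a, h b) ∈ I.roleI r)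

/-- Local injectivity of a homomorphism on an ABox. -/
def LocInj {D : Type} (h : ℕ → D) (A : ABox) : Prop :=
  ∀ r a b c, Assertion.role r a b ∈ A → Assertion.role r a c ∈ A → h b = h c → b = c

/-- The ABoxes in a collection of examples have pairwise disjoint individual names. -/
def PairwiseDisjInds (S : Finset ABox) : Prop :=
  ∀ A ∈ S, ∀ B ∈ S, A ≠ B → Disjoint (ABoxInds A) (ABoxInds B)

/-! ## Queries -/

/-- Terms of a query: variables and individual names. -/
inductive Term : Type
  | var (x : ℕ)
  | ind (a : ℕ)
deriving DecidableEq

/-- Atoms of a query. -/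
inductive Atom : Type
  | catom (A : ℕ) (t : Term)
  | ratom (r : ℕ) (t t' : Term)
deriving DecidableEq

/-- A (Boolean) conjunctive query, viewed as its finite set of atoms;
all variables are (implicitly) existentially quantified. -/
abbrev CQ := Finset Atom

/-- A union of conjunctive queries. -/
abbrev UCQ := Finset CQ

def TermInds : Term → Finset ℕ
  | .var _ => ∅
  | .ind a => {a}

def AtomInds : Atom → Finset ℕ
  | .catom _ t => TermInds t
  | .ratom _ t t' => TermInds t ∪ TermInds t'

/-- Individual names occurring in a CQ. -/
def CQInds (q : CQ) : Finset ℕ := q.biUnion AtomInds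

def UCQInds (q : UCQ) : Finset ℕ := q.biUnion CQInds

def AtomCNs : Atom → Finset ℕ
  | .catom P _ => {P}
  | .ratom _ _ _ => ∅

/-- Concept names occurring in a CQ. -/
def CQCNs (q : CQ) : Finset ℕ := q.biUnion AtomCNs

def UCQCNs (q : UCQ) : Finset ℕ := q.biUnion CQCNs

def AtomGround : Atom → Prop
  | .catom _ t => ∃ a, t = Term.ind a
  | .ratom _ t t' => (∃ a, t = Term.ind a) ∧ (∃ a, t' = Term.ind a)

/-- A full CQ: no (existentially quantified) variables. -/
def CQIsFull (q : CQ) : Prop := ∀ α ∈ q, AtomGround α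

def TermEval (I : Interp) (v : ℕ → I.Dom) : Term → I.Dom
  | .var x => v x
  | .ind a => I.indI a

def Interp.SatAtom (I : Interp) (v : ℕ → I.Dom) : Atom → Prop
  | .catom P t => TermEval I v t ∈ I.concI P
  | .ratom r t t' => (TermEval I v t, TermEval I v t') ∈ I.roleI r

/-- `I ⊨ q` for a CQ `q`: there is a (strong) homomorphism of the atoms of `q`
into `I` that is the identity on individual names. -/
def Interp.SatCQ (I : Interp) (q : CQ) : Prop :=
  ∃ v : ℕ → I.Dom, ∀ α ∈ q, I.SatAtom v α

/-- `I ⊨ q` for a UCQ `q`: some disjunct is satisfied. -/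
def Interp.SatUCQ (I : Interp) (q : UCQ) : Prop := ∃ p ∈ q, I.SatCQ p

/-- `A ∪ O ⊨ Q(a)` for an atomic query. -/
def EntailsAQ (A : ABox) (O : Ontology) (Q a : ℕ) : Prop :=
  ∀ I : Interp, I.IsModelOf O → I.SatABox A → I.indI a ∈ I.concI Q

/-- `A ∪ O ⊨ q` for a CQ. -/
def EntailsCQ (A : ABox) (O : Ontology) (q : CQ) : Prop :=
  ∀ I : Interp, I.IsModelOf O → I.SatABox A → I.SatCQ q

/-- `A ∪ O ⊨ q` for a UCQ. -/
def EntailsUCQ (A : ABox) (O : Ontology) (q : UCQ) : Prop :=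
  ∀ I : Interp, I.IsModelOf O → I.SatABox A → I.SatUCQ q

/-! ## Examples and fitting -/

/-- An ABox-AQ example `(𝒜, Q(a))`. -/
abbrev AQEx := ABox × ℕ × ℕ

/-- An ABox-CQ (in particular, ABox-FullCQ) example `(𝒜, q)`. -/
abbrev CQEx := ABox × CQ

/-- An ABox-UCQ example `(𝒜, q)`. -/
abbrev UEx := ABox × UCQ

/-- `O` fits a collection of labeled ABox(-consistency) examples. -/
def FitsCons (O : Ontology) (Ep En : Finset ABox) : Prop :=
  (∀ A ∈ Ep, ConsistentWith A O) ∧ (∀ A ∈ En, ¬ ConsistentWith A O)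

/-- `O` fits a collection of labeled ABox-AQ examples. -/
def FitsAQ (O : Ontology) (Ep En : Finset AQEx) : Prop :=
  (∀ e ∈ Ep, EntailsAQ e.1 O e.2.1 e.2.2) ∧ (∀ e ∈ En, ¬ EntailsAQ e.1 O e.2.1 e.2.2)

/-- `O` fits a collection of labeled ABox-CQ examples. -/
def FitsCQ (O : Ontology) (Ep En : Finset CQEx) : Prop :=
  (∀ e ∈ Ep, EntailsCQ e.1 O e.2) ∧ (∀ e ∈ En, ¬ EntailsCQ e.1 O e.2)

/-- `O` fits a collection of labeled ABox-UCQ examples. -/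
def FitsUCQ (O : Ontology) (Ep En : Finset UEx) : Prop :=
  (∀ e ∈ Ep, EntailsUCQ e.1 O e.2) ∧ (∀ e ∈ En, ¬ EntailsUCQ e.1 O e.2)

/-- An example `(A, q)` is inconsistent if every ALCI-ontology `O` with
`A ∪ O ⊨ q` is inconsistent with `A`. -/
def InconsistentEx (A : ABox) (q : CQ) : Prop :=
  ∀ O : Ontology, OntologyInLang DL.alci O → EntailsCQ A O q → ¬ ConsistentWith A O

/-! ## Completions and refutation candidates -/

/-- The disjoint union `A⁻` of the ABoxes of the negative AQ examples
(the ABoxes of a collection have pairwise disjoint individual names, so the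
disjoint union is the plain union). -/
def NegUnionAQ (En : Finset AQEx) : ABox := En.sup Prod.fst

/-- The disjoint union `A⁻` of the ABoxes of the negative CQ examples. -/
def NegUnionCQ (En : Finset CQEx) : ABox := En.sup Prod.fst

/-- A completion for a collection of ABox-AQ examples: extends `A⁻` by concept
assertions `Q(b)` with `b ∈ ind(A⁻)` and `Q` occurring as an AQ in `E⁺`. -/
def IsCompletionAQ (Ep En : Finset AQEx) (C : ABox) : Prop :=
  NegUnionAQ En ⊆ C ∧
  ∀ α ∈ C, α ∈ NegUnionAQ En ∨
    ∃ Q b, α = Assertion.conc Q b ∧ b ∈ ABoxInds (NegUnionAQ En) ∧ ∃ e ∈ Ep, e.2.1 = Q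

/-- Refutation candidates for a collection of ABox-AQ examples. -/
inductive RefCandAQ (Ep : Finset AQEx) (base : ABox) : ABox → Prop
  | base : RefCandAQ Ep base base
  | step {C : ABox} {A : ABox} {Q a : ℕ} {h : ℕ → ℕ} :
      RefCandAQ Ep base C → (A, Q, a) ∈ Ep → ABoxHom h A C →
      RefCandAQ Ep base (insert (Assertion.conc Q (h a)) C)

/-- A completion for a collection of ABox-FullCQ examples: extends `A⁻` by
concept assertions `Q(b)` with `b ∈ ind(A⁻)` and `Q` occurring in a query of a
positive example. -/
def IsCompletionCQ (Ep En : Finset CQEx) (C : ABox) : Prop :=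
  NegUnionCQ En ⊆ C ∧
  ∀ α ∈ C, α ∈ NegUnionCQ En ∨
    ∃ Q b, α = Assertion.conc Q b ∧ b ∈ ABoxInds (NegUnionCQ En) ∧ ∃ e ∈ Ep, Q ∈ CQCNs e.2

/-- Refutation candidates for a collection of ABox-FullCQ examples. -/
inductive RefCandCQ (Ep : Finset CQEx) (base : ABox) : ABox → Prop
  | base : RefCandCQ Ep base base
  | step {C : ABox} {A : ABox} {q : CQ} {Q a : ℕ} {h : ℕ → ℕ} :
      RefCandCQ Ep base C → (A, q) ∈ Ep → ¬ InconsistentEx A q → ABoxHom h A C →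
      Atom.catom Q (Term.ind a) ∈ q →
      RefCandCQ Ep base (insert (Assertion.conc Q (h a)) C)

/-! ## Forest models, unravelings and `I_{A,h,L}` -/

/-- The edge relation of the graph of a forest model: some role edge, excluding
pairs of ABox individuals. -/
def ForestEdge (I : Interp) (A : ABox) (d e : I.Dom) : Prop :=
  (∃ r, (d, e) ∈ I.roleI r) ∧
  ¬ ∃ a ∈ ABoxInds A, ∃ b ∈ ABoxInds A, d = I.indI a ∧ e = I.indI b

/-- The undirected version of the graph of a forest model. -/
def ForestGraph (I : Interp) (A : ABox) : SimpleGraph I.Dom where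
  Adj d e := d ≠ e ∧ (ForestEdge I A d e ∨ ForestEdge I A e d)
  symm := ⟨fun _ _ h => ⟨h.1.symm, h.2.symm⟩⟩
  loopless := ⟨fun _ h => h.1 rfl⟩

/-- `I` is an `L`-forest model of the ABox `A`:
it is a model of `A`; role edges among ABox individuals are exactly those
asserted in `A`; and the remaining role edges form a forest (for ALC a
directed forest whose edges point away from the roots, for ALCI an
undirected forest). -/
def IsForestModel (L : DL) (I : Interp) (A : ABox) : Prop :=
  I.SatABox A ∧
  (∀ r a b, a ∈ ABoxInds A → b ∈ ABoxInds A →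
    ((I.indI a, I.indI b) ∈ I.roleI r ↔ Assertion.role r a b ∈ A)) ∧
  (match L with
    | DL.alc =>
        (∀ e : I.Dom, {d : I.Dom | ForestEdge I A d e}.Subsingleton) ∧
        WellFounded (fun d e : I.Dom => ForestEdge I A d e)
    | DL.alci =>
        (∀ d : I.Dom, ¬ ForestEdge I A d d) ∧ (ForestGraph I A).IsAcyclic)

/-- `e` is a neighbor of `d` in `I`. -/
def Neighbor (I : Interp) (d e : I.Dom) : Prop :=
  ∃ r, (d, e) ∈ I.roleI r ∨ (e, d) ∈ I.roleI r

/-- The degree of `I` (maximal number of neighbors) is at most `n`. -/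
def DegreeLE (I : Interp) (n : ℕ) : Prop :=
  ∀ d : I.Dom, ∃ s : Finset I.Dom, s.card ≤ n ∧ ∀ e : I.Dom, Neighbor I d e → e ∈ s

/-- The disjoint union of a family of interpretations (`pick` chooses, for
every individual name, the component interpreting it). -/
def Interp.disjUnion {ι : Type} (J : ι → Interp) (pick : ℕ → ι) : Interp where
  Dom := Σ i : ι, (J i).Dom
  indI := fun n => ⟨pick n, (J (pick n)).indI n⟩
  indI_inj := by
    intro m n hmn
    obtain ⟨h1, h2⟩ := Sigma.ext_iff.mp hmn
    dsimp only at h1 h2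
    rw [h1] at h2
    exact (J (pick n)).indI_inj (eq_of_heq h2)
  concI := fun P => {x | x.2 ∈ (J x.1).concI P}
  roleI := fun r => {p | ∃ (i : ι) (d e : (J i).Dom),
    p = (⟨i, d⟩, ⟨i, e⟩) ∧ (d, e) ∈ (J i).roleI r}

/-- `l` is a path in `I` starting at `d` (for `L = ALC`, only role names may
occur on the path; for `L = ALCI` also inverse roles). -/
def IsPathFrom (L : DL) (I : Interp) : I.Dom → List (DLRole × I.Dom) → Prop
  | _, [] => True
  | d, (r, e) :: l =>
      (d, e) ∈ I.rSem r ∧ (L = DL.alc → ∃ m, r = DLRole.name m) ∧ IsPathFrom L I e l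

/-- The tail (last element) of a path starting at `d`. -/
def PathTail (I : Interp) (d : I.Dom) (l : List (DLRole × I.Dom)) : I.Dom :=
  (l.getLast?).elim d Prod.snd

/-- Domain of `I_{A,h,L}`: individual names plus, for every individual name,
paths in `I` (elements not corresponding to `ind(A)` or to valid nonempty
paths are unlabeled and isolated junk). -/
abbrev IAhDom (I : Interp) : Type := ℕ ⊕ (ℕ × List (DLRole × I.Dom))

/-- The element of `I_{A,h,L}` given by the path `l` attached at individual
`a`; the root (empty path) is identified with `a` itself. -/
def IAhNode (I : Interp) (a : ℕ) : List (DLRole × I.Dom) → IAhDom I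
  | [] => Sum.inl a
  | l => Sum.inr (a, l)

/-- Validity of a path attached at `a` in `I_{A,h,L}`. -/
def IAhValid (L : DL) (I : Interp) (A : ABox) (h : ℕ → I.Dom)
    (a : ℕ) (l : List (DLRole × I.Dom)) : Prop :=
  a ∈ ABoxInds A ∧ IsPathFrom L I (h a) l

/-- The interpretation `I_{A,h,L}`: start from the interpretation with domain
`ind(A)`, concept memberships induced from `I` via `h`, and role edges exactly
the role assertions of `A`; then disjointly attach, for every `a ∈ ind(A)`,
the `L`-unraveling of `I` at `h(a)`, identifying its root with `a`. -/
def IAh (L : DL) (I : Interp) (A : ABox) (h : ℕ → I.Dom) : Interp where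
  Dom := IAhDom I
  indI := Sum.inl
  indI_inj := Sum.inl_injective
  concI := fun P => {x : IAhDom I |
    (∃ a, x = Sum.inl a ∧ a ∈ ABoxInds A ∧ h a ∈ I.concI P) ∨
    (∃ a l, x = Sum.inr (a, l) ∧ l ≠ [] ∧ IAhValid L I A h a l ∧
      PathTail I (h a) l ∈ I.concI P)}
  roleI := fun r => {p : IAhDom I × IAhDom I |
    (∃ a b, p.1 = Sum.inl a ∧ p.2 = Sum.inl b ∧ Assertion.role r a b ∈ A) ∨
    (∃ a l e, IAhValid L I A h a (l ++ [(DLRole.name r, e)]) ∧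
      p.1 = IAhNode I a l ∧ p.2 = IAhNode I a (l ++ [(DLRole.name r, e)])) ∨
    (∃ a l e, IAhValid L I A h a (l ++ [(DLRole.inv r, e)]) ∧
      p.1 = IAhNode I a (l ++ [(DLRole.inv r, e)]) ∧ p.2 = IAhNode I a l)}

/-- Restriction of an interpretation to the elements satisfying `P`
(elements outside `P` become unlabeled and isolated). -/
def Interp.restrictP (I : Interp) (P : I.Dom → Prop) : Interp where
  Dom := I.Dom
  indI := I.indI
  indI_inj := I.indI_inj
  concI := fun Q => {d | d ∈ I.concI Q ∧ P d}
  roleI := fun r => {p | p ∈ I.roleI r ∧ P p.1 ∧ P p.2}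

/-- Depth of elements of `I_{A,h,L}` (ABox individuals have depth 0). -/
def IAhDepthLE (I : Interp) (n : ℕ) : IAhDom I → Prop
  | Sum.inl _ => True
  | Sum.inr al => al.2.length ≤ n

/-! ## Sizes -/

/-- Size of a UCQ (number of atoms). -/
def UCQSize (q : UCQ) : ℕ := q.sum Finset.card

/-- Size of an ABox-UCQ example. -/
def UExSize (e : UEx) : ℕ := e.1.card + UCQSize e.2

/-- Size `||E||` of a collection of ABox-UCQ examples. -/
def ESize (Ep En : Finset UEx) : ℕ := Ep.sum UExSize + En.sum UExSize

/-- The (exponential) bound `bound(E)` on the degree: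
`||E⁻||` plus the sum over positive examples `(A,q)` of `(||(A,q)||+1)^{||q||}`. -/
def EBound (Ep En : Finset UEx) : ℕ :=
  En.sum UExSize + Ep.sum (fun e => (UExSize e + 1) ^ UCQSize e.2)

/-! ## Connectivity, components, variations -/

def ABoxAdj (A : ABox) (a b : ℕ) : Prop :=
  ∃ r, Assertion.role r a b ∈ A ∨ Assertion.role r b a ∈ A

/-- Connectivity of individuals in an ABox. -/
def ABoxConn (A : ABox) : ℕ → ℕ → Prop := Relation.ReflTransGen (ABoxAdj A)

/-- `B` is a maximally connected component of the ABox `A`. -/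
def IsComponent (B A : ABox) : Prop :=
  ∃ a ∈ ABoxInds A, ∀ α : Assertion,
    α ∈ B ↔ α ∈ A ∧ ∀ c ∈ AssertionInds α, ABoxConn A a c

def AtomTerms : Atom → Finset Term
  | .catom _ t => {t}
  | .ratom _ t t' => {t, t'}

/-- The terms (variables and individuals) occurring in a CQ. -/
def CQTerms (q : CQ) : Finset Term := q.biUnion AtomTerms

def CQAdj (q : CQ) (t t' : Term) : Prop :=
  ∃ r, Atom.ratom r t t' ∈ q ∨ Atom.ratom r t' t ∈ q

/-- A CQ is connected. -/
def CQConnected (q : CQ) : Prop :=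
  ∀ t ∈ CQTerms q, ∀ t' ∈ CQTerms q, Relation.ReflTransGen (CQAdj q) t t'

def SubstTerm (σ : ℕ → Term) : Term → Term
  | .var x => σ x
  | .ind a => Term.ind a

def SubstAtom (σ : ℕ → Term) : Atom → Atom
  | .catom P t => Atom.catom P (SubstTerm σ t)
  | .ratom r t t' => Atom.ratom r (SubstTerm σ t) (SubstTerm σ t')

/-- An `A`-variation of a CQ `p`: consistently replace zero or more variables by
individual names from `ind(A)` and possibly identify variables. -/
def IsVariation (A : ABox) (p p' : CQ) : Prop :=
  ∃ σ : ℕ → Term,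
    (∀ x : ℕ, (∃ y, σ x = Term.var y) ∨ ∃ a ∈ ABoxInds A, σ x = Term.ind a) ∧
    p' = p.image (SubstAtom σ)

def Assertion.toAtom : Assertion → Atom
  | .conc P a => Atom.catom P (Term.ind a)
  | .role r a b => Atom.ratom r (Term.ind a) (Term.ind b)

/-- The interpretation `I_q` induced by a CQ. -/
def CQInterp (p : CQ) : Interp where
  Dom := Term
  indI := Term.ind
  indI_inj := fun _ _ hab => Term.ind.inj hab
  concI := fun P => {t | Atom.catom P t ∈ p}
  roleI := fun r => {tt | Atom.ratom r tt.1 tt.2 ∈ p}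

/-- A proper `A`-variation. -/
def IsProperVariation (L : DL) (A : ABox) (p p' : CQ) : Prop :=
  IsVariation A p p' ∧
  (∀ r a b, Atom.ratom r (Term.ind a) (Term.ind b) ∈ p' → Assertion.role r a b ∈ A) ∧
  IsForestModel L (CQInterp p') (A.filter fun α => α.toAtom ∈ p')

/-- A weak homomorphism from a CQ into an interpretation (need not be the
identity on individual names). -/
def WeakHom (I : Interp) (g : Term → I.Dom) (p : CQ) : Prop :=
  (∀ P t, Atom.catom P t ∈ p → g t ∈ I.concI P) ∧
  (∀ r t t', Atom.ratom r t t' ∈ p → (g t, g t') ∈ I.roleI r)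

def ReachStep (L : DL) (I : Interp) (d e : I.Dom) : Prop :=
  match L with
  | DL.alc => ∃ r, (d, e) ∈ I.roleI r
  | DL.alci => ∃ r, (d, e) ∈ I.roleI r ∨ (e, d) ∈ I.roleI r

/-- `L`-reachability in an interpretation. -/
def Reach (L : DL) (I : Interp) : I.Dom → I.Dom → Prop :=
  Relation.ReflTransGen (ReachStep L I)

/-- Compatibility of a weak homomorphism `g` (from `p'` to `I`) with a
homomorphism `h` (from `A` to `I`). -/
def CompatibleWith (L : DL) (I : Interp) (A : ABox) (h : ℕ → I.Dom)
    (p' : CQ) (g : Term → I.Dom) : Prop :=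
  (∀ a ∈ CQInds p', g (Term.ind a) = h a) ∧
  (∀ x : ℕ, Term.var x ∈ CQTerms p' →
    ∃ a ∈ ABoxInds A, Reach L I (h a) (g (Term.var x)))

/-- Query classes. -/
inductive QClass : Type
  | aq
  | fullcq
  | cq
  | ucq

/-- A UCQ belongs to a query class. -/
def UCQInClass : QClass → UCQ → Prop
  | .aq, q => ∃ Q a, q = {({Atom.catom Q (Term.ind a)} : CQ)}
  | .fullcq, q => ∃ p : CQ, q = {p} ∧ CQIsFull p
  | .cq, q => ∃ p : CQ, q = {p}
  | .ucq, _ => True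

/-!
(1) ⇒ (2): take for `C` the ABox `A⁻` extended by every AQ `Q(b)` that `A⁻ ∪ O` entails.
Without number restrictions an ALCI-ontology cannot distinguish an element from a copy of it,
so pulling models back along an ABox homomorphism shows that AQ entailment is preserved under
homomorphisms; this gives (a). For (b), the countermodels of the negative examples, whose ABoxes
are pairwise disjoint, glue into a single model of `A⁻ ∪ O` refuting each negative query.

(2) ⇒ (1): describe `C` by an ALC-ontology over fresh concept names `X_c`, `c ∈ ind(C)`: every
element carrying a relevant concept name or role edge has exactly one label `X_c`, and labelled
elements respect the concept and role assertions of `C`. In a model of a positive ABox the labels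
define a homomorphism into `C`, so (a) gives the query; `C` itself, with `X_c = {c}`, is a model
of the ontology and of every negative ABox, and it refutes the negative queries by (b).
-/

lemma OntologyInLang.toALCI {L : DL} {O : Ontology} (h : OntologyInLang L O) :
    OntologyInLang DL.alci O := by
  cases L with
  | alc => exact fun ci hci => ⟨(h ci hci).2.1, (h ci hci).2.2.2⟩
  | alci => exact h

lemma OntologyInLang.ofALC {O : Ontology} (h : OntologyInLang DL.alc O) (L : DL) :
    OntologyInLang L O := by
  cases L with
  | alc => exact h
  | alci => exact h.toALCI

lemma mem_ABoxInds_of_conc {A : ABox} {P a : ℕ} (h : Assertion.conc P a ∈ A) :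
    a ∈ ABoxInds A :=
  Finset.mem_biUnion.2 ⟨_, h, by simp [AssertionInds]⟩

lemma mem_ABoxInds_of_role_left {A : ABox} {r a b : ℕ} (h : Assertion.role r a b ∈ A) :
    a ∈ ABoxInds A :=
  Finset.mem_biUnion.2 ⟨_, h, by simp [AssertionInds]⟩

lemma mem_ABoxInds_of_role_right {A : ABox} {r a b : ℕ} (h : Assertion.role r a b ∈ A) :
    b ∈ ABoxInds A :=
  Finset.mem_biUnion.2 ⟨_, h, by simp [AssertionInds]⟩

lemma mem_ABoxInds_iff {A : ABox} {a : ℕ} :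
    a ∈ ABoxInds A ↔ (∃ P, Assertion.conc P a ∈ A) ∨
      ∃ r b, Assertion.role r a b ∈ A ∨ Assertion.role r b a ∈ A := by
  constructor
  · intro ha
    obtain ⟨α, hα, haα⟩ := Finset.mem_biUnion.1 ha
    cases α with
    | conc P b =>
      obtain rfl : a = b := by simpa [AssertionInds] using haα
      exact Or.inl ⟨P, hα⟩
    | role r b c =>
      obtain rfl | rfl : a = b ∨ a = c := by simpa [AssertionInds] using haα
      exacts [Or.inr ⟨r, c, Or.inl hα⟩, Or.inr ⟨r, b, Or.inr hα⟩]
  · rintro (⟨P, h⟩ | ⟨r, b, h | h⟩)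
    exacts [mem_ABoxInds_of_conc h, mem_ABoxInds_of_role_left h, mem_ABoxInds_of_role_right h]

lemma mem_ABoxCNs {A : ABox} {P a : ℕ} (h : Assertion.conc P a ∈ A) : P ∈ ABoxCNs A :=
  Finset.mem_biUnion.2 ⟨_, h, by simp [AssertionCNs]⟩

def AssertionRNs : Assertion → Finset ℕ
  | .conc _ _ => ∅
  | .role r _ _ => {r}

def ABoxRNs (A : ABox) : Finset ℕ := A.biUnion AssertionRNs

lemma mem_ABoxRNs {A : ABox} {r a b : ℕ} (h : Assertion.role r a b ∈ A) : r ∈ ABoxRNs A :=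
  Finset.mem_biUnion.2 ⟨_, h, by simp [AssertionRNs]⟩

lemma ABoxHom.mem_ABoxInds {h : ℕ → ℕ} {A B : ABox} (hh : ABoxHom h A B) {a : ℕ}
    (ha : a ∈ ABoxInds A) : h a ∈ ABoxInds B := by
  rcases mem_ABoxInds_iff.1 ha with ⟨P, hP⟩ | ⟨r, b, hr | hr⟩
  exacts [mem_ABoxInds_of_conc (hh.1 _ _ hP), mem_ABoxInds_of_role_left (hh.2 _ _ _ hr),
    mem_ABoxInds_of_role_right (hh.2 _ _ _ hr)]

lemma PairwiseDisjInds.mono {S T : Finset ABox} (hT : PairwiseDisjInds T) (hST : S ⊆ T) :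
    PairwiseDisjInds S :=
  fun A hA B hB hAB => hT A (hST hA) B (hST hB) hAB

lemma Interp.satABox_sup {ι : Type} (I : Interp) (S : Finset ι) (f : ι → ABox) :
    I.SatABox (S.sup f) ↔ ∀ i ∈ S, I.SatABox (f i) := by
  simp only [Interp.SatABox, Finset.mem_sup]
  grind

lemma consistentWith_of_not_entailsAQ {A : ABox} {O : Ontology} {Q a : ℕ}
    (h : ¬ EntailsAQ A O Q a) : ConsistentWith A O := by
  simp only [EntailsAQ, not_forall] at h
  obtain ⟨I, hO, hA, -⟩ := h
  exact ⟨I, hO, hA⟩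

/-- A copy of `I` in which the individual name `n` denotes a fresh twin of `f n`. -/
def Interp.reindex (I : Interp) (f : ℕ → I.Dom) : Interp where
  Dom := I.Dom × ℕ
  indI n := (f n, n)
  indI_inj _ _ h := congrArg Prod.snd h
  concI P := Prod.fst ⁻¹' I.concI P
  roleI r := {p | (p.1.1, p.2.1) ∈ I.roleI r}

lemma Interp.reindex_rSem (I : Interp) (f : ℕ → I.Dom) (r : DLRole) :
    (I.reindex f).rSem r = {p | (p.1.1, p.2.1) ∈ I.rSem r} := by
  cases r <;> rfl

lemma Interp.reindex_cSem (I : Interp) (f : ℕ → I.Dom) {C : Concept} (hC : C.countFree) :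
    (I.reindex f).cSem C = Prod.fst ⁻¹' I.cSem C := by
  induction C with
  | top | atom _ => rfl
  | neg C ih =>
    simp only [Interp.cSem, ih hC]
    rfl
  | inter C D ihC ihD =>
    simp only [Interp.cSem, ihC hC.1, ihD hC.2]
    rfl
  | ex r C ih =>
    ext x
    simp only [Interp.cSem, ih hC, reindex_rSem, Set.mem_ofPred_eq]
    exact ⟨fun ⟨e, he, heC⟩ => ⟨e.1, he, heC⟩, fun ⟨e, he, heC⟩ => ⟨(e, 0), he, heC⟩⟩
  | atLeast | atMost => exact hC.elim

lemma Interp.IsModelOf.reindex {I : Interp} {O : Ontology} (hO : OntologyInLang DL.alci O)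
    (hI : I.IsModelOf O) (f : ℕ → I.Dom) : (I.reindex f).IsModelOf O := by
  intro ci hci
  rw [I.reindex_cSem f (hO ci hci).1, I.reindex_cSem f (hO ci hci).2]
  exact Set.preimage_mono (hI ci hci)

lemma Interp.SatABox.reindex {I : Interp} {h : ℕ → ℕ} {A B : ABox} (hh : ABoxHom h A B)
    (hB : I.SatABox B) : (I.reindex (I.indI ∘ h)).SatABox A := by
  rintro (⟨P, a⟩ | ⟨r, a, b⟩) hα
  exacts [hB _ (hh.1 _ _ hα), hB _ (hh.2 _ _ _ hα)]

lemma EntailsAQ.of_hom {A B : ABox} {O : Ontology} (hO : OntologyInLang DL.alci O)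
    {h : ℕ → ℕ} (hh : ABoxHom h A B) {Q a : ℕ} (hE : EntailsAQ A O Q a) :
    EntailsAQ B O Q (h a) := fun _ hIO hIB =>
  hE _ (hIO.reindex hO _) (hIB.reindex hh)

lemma Interp.disjUnion_rSem {ι : Type} (J : ι → Interp) (pick : ℕ → ι) (r : DLRole)
    (x y : (Interp.disjUnion J pick).Dom) :
    (x, y) ∈ (Interp.disjUnion J pick).rSem r ↔
      ∃ (i : ι) (d e : (J i).Dom), x = ⟨i, d⟩ ∧ y = ⟨i, e⟩ ∧ (d, e) ∈ (J i).rSem r := by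
  cases r with
  | name r =>
    constructor
    · rintro ⟨i, d, e, hp, hde⟩
      exact ⟨i, d, e, congrArg Prod.fst hp, congrArg Prod.snd hp, hde⟩
    · rintro ⟨i, d, e, rfl, rfl, hde⟩
      exact ⟨i, d, e, rfl, hde⟩
  | inv r =>
    constructor
    · rintro ⟨i, d, e, hp, hde⟩
      exact ⟨i, e, d, congrArg Prod.snd hp, congrArg Prod.fst hp, hde⟩
    · rintro ⟨i, d, e, rfl, rfl, hde⟩
      exact ⟨i, e, d, rfl, hde⟩

lemma Interp.disjUnion_cSem {ι : Type} (J : ι → Interp) (pick : ℕ → ι)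
    {C : Concept} (hC : C.countFree) :
    (Interp.disjUnion J pick).cSem C = {x | x.2 ∈ (J x.1).cSem C} := by
  induction C with
  | top | atom _ => rfl
  | neg C ih =>
    simp only [Interp.cSem, ih hC]
    rfl
  | inter C D ihC ihD =>
    simp only [Interp.cSem, ihC hC.1, ihD hC.2]
    rfl
  | ex r C ih =>
    ext ⟨i, d⟩
    simp only [Interp.cSem, ih hC, Set.mem_ofPred_eq, disjUnion_rSem]
    constructor
    · rintro ⟨_, ⟨j, d', e, hx, rfl, hde⟩, heC⟩
      cases hx
      exact ⟨e, hde, heC⟩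
    · rintro ⟨e, hde, heC⟩
      exact ⟨⟨i, e⟩, ⟨i, d, e, rfl, rfl, hde⟩, heC⟩
  | atLeast | atMost => exact hC.elim

lemma Interp.isModelOf_disjUnion {ι : Type} {J : ι → Interp} (pick : ℕ → ι) {O : Ontology}
    (hO : OntologyInLang DL.alci O) (hJ : ∀ i, (J i).IsModelOf O) :
    (Interp.disjUnion J pick).IsModelOf O := by
  intro ci hci
  rw [disjUnion_cSem J pick (hO ci hci).1, disjUnion_cSem J pick (hO ci hci).2]
  exact fun x hx => hJ x.1 ci hci hx

lemma Interp.disjUnion_indI {ι : Type} (J : ι → Interp) {pick : ℕ → ι} {n : ℕ} {i : ι}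
    (h : pick n = i) : (Interp.disjUnion J pick).indI n = ⟨i, (J i).indI n⟩ := by
  subst h
  rfl

lemma Interp.satABox_disjUnion {ι : Type} {J : ι → Interp} {pick : ℕ → ι} {i : ι}
    {B : ABox} (hB : (J i).SatABox B) (hpick : ∀ n ∈ ABoxInds B, pick n = i) :
    (Interp.disjUnion J pick).SatABox B := by
  rintro (⟨P, a⟩ | ⟨r, a, b⟩) hα
  · show (Interp.disjUnion J pick).indI a ∈ _
    rw [disjUnion_indI J (hpick a (mem_ABoxInds_of_conc hα))]
    exact hB _ hα
  · show ((Interp.disjUnion J pick).indI a, (Interp.disjUnion J pick).indI b) ∈ _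
    rw [disjUnion_indI J (hpick a (mem_ABoxInds_of_role_left hα)),
      disjUnion_indI J (hpick b (mem_ABoxInds_of_role_right hα))]
    exact ⟨i, _, _, rfl, hB _ hα⟩

/-- A countermodel for `A` and models of the other ABoxes are glued into a disjoint union. -/
lemma not_entailsAQ_sup {O : Ontology} (hO : OntologyInLang DL.alci O) {S : Finset ABox}
    (hdisj : PairwiseDisjInds S) (hcons : ∀ B ∈ S, ConsistentWith B O) {A : ABox}
    (hA : A ∈ S) {Q a : ℕ} (ha : a ∈ ABoxInds A) (hnot : ¬ EntailsAQ A O Q a) :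
    ¬ EntailsAQ (S.sup id) O Q a := by
  classical
  obtain ⟨I₀, hI₀O, hI₀A, hI₀Q⟩ :
      ∃ I : Interp, I.IsModelOf O ∧ I.SatABox A ∧ I.indI a ∉ I.concI Q := by
    simpa [EntailsAQ] using hnot
  have hmodels : ∀ B, ∃ I : Interp, I.IsModelOf O ∧ (B ∈ S → I.SatABox B) ∧
      (B = A → I.indI a ∉ I.concI Q) := by
    intro B
    by_cases hBA : B = A
    · exact ⟨I₀, hI₀O, fun _ => hBA ▸ hI₀A, fun _ => hI₀Q⟩
    by_cases hB : B ∈ S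
    · obtain ⟨I, hIO, hIB⟩ := hcons B hB
      exact ⟨I, hIO, fun _ => hIB, fun h => absurd h hBA⟩
    · exact ⟨I₀, hI₀O, fun h => absurd h hB, fun h => absurd h hBA⟩
  choose K hKO hKS hKA using hmodels
  let pick : ℕ → ABox := fun n => if h : ∃ B ∈ S, n ∈ ABoxInds B then h.choose else A
  have hpick : ∀ B ∈ S, ∀ n ∈ ABoxInds B, pick n = B := by
    intro B hB n hn
    have hex : ∃ B ∈ S, n ∈ ABoxInds B := ⟨B, hB, hn⟩
    obtain ⟨hB', hn'⟩ := hex.choose_spec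
    simp only [pick, dif_pos hex]
    by_contra hne
    exact Finset.disjoint_left.1 (hdisj _ hB' B hB hne) hn' hn
  intro hE
  have hKa := hE _ (Interp.isModelOf_disjUnion pick hO hKO)
    ((Interp.satABox_sup _ S id).2 fun B hB => Interp.satABox_disjUnion (hKS B hB) (hpick B hB))
  rw [Interp.disjUnion_indI K (hpick A hA a ha)] at hKa
  exact hKA A rfl hKa

lemma IsCompletionAQ.ABoxInds_subset {Ep En : Finset AQEx} {C : ABox}
    (hC : IsCompletionAQ Ep En C) : ABoxInds C ⊆ ABoxInds (NegUnionAQ En) := by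
  intro b hb
  obtain ⟨α, hα, hbα⟩ := Finset.mem_biUnion.1 hb
  rcases hC.2 α hα with hα' | ⟨Q, c, rfl, hc, -⟩
  · exact Finset.mem_biUnion.2 ⟨α, hα', hbα⟩
  · obtain rfl : b = c := by simpa [AssertionInds] using hbα
    exact hc

open Classical in
noncomputable def entailedCompletion (Ep En : Finset AQEx) (O : Ontology) : ABox :=
  NegUnionAQ En ∪ ((ABoxInds (NegUnionAQ En) ×ˢ Ep.image (·.2.1)).filter
    (fun p => EntailsAQ (NegUnionAQ En) O p.2 p.1)).image (fun p => Assertion.conc p.2 p.1)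

section entailedCompletion

variable {Ep En : Finset AQEx} {O : Ontology}

lemma mem_entailedCompletion {α : Assertion} :
    α ∈ entailedCompletion Ep En O ↔ α ∈ NegUnionAQ En ∨
      ∃ Q b, α = Assertion.conc Q b ∧ b ∈ ABoxInds (NegUnionAQ En) ∧ (∃ e ∈ Ep, e.2.1 = Q) ∧
        EntailsAQ (NegUnionAQ En) O Q b := by
  simp only [entailedCompletion, Finset.mem_union, Finset.mem_image, Finset.mem_filter,
    Finset.mem_product, Prod.exists]
  grind

lemma isCompletionAQ_entailedCompletion : IsCompletionAQ Ep En (entailedCompletion Ep En O) :=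
  ⟨fun _ hα => mem_entailedCompletion.2 (Or.inl hα), fun _ hα =>
    (mem_entailedCompletion.1 hα).imp_right fun ⟨Q, b, hα, hb, hQ, _⟩ => ⟨Q, b, hα, hb, hQ⟩⟩

lemma entailsAQ_of_conc_mem_entailedCompletion {Q b : ℕ}
    (h : Assertion.conc Q b ∈ entailedCompletion Ep En O) :
    EntailsAQ (NegUnionAQ En) O Q b := by
  rcases mem_entailedCompletion.1 h with h | ⟨Q', b', hα, -, -, hE⟩
  · exact fun I _ hI => hI _ h
  · cases hα
    exact hE

lemma Interp.satABox_entailedCompletion {I : Interp} (hIO : I.IsModelOf O)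
    (hI : I.SatABox (NegUnionAQ En)) : I.SatABox (entailedCompletion Ep En O) := by
  intro α hα
  rcases mem_entailedCompletion.1 hα with h | ⟨Q, b, rfl, -, -, hE⟩
  exacts [hI α h, hE I hIO hI]

end entailedCompletion

lemma not_entailsAQ_negUnionAQ {En : Finset AQEx} (hdisj : PairwiseDisjInds (En.image Prod.fst))
    (hwf : ∀ e ∈ En, e.2.2 ∈ ABoxInds e.1) {O : Ontology} (hO : OntologyInLang DL.alci O)
    (hfit : ∀ e ∈ En, ¬ EntailsAQ e.1 O e.2.1 e.2.2) {e : AQEx} (he : e ∈ En) :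
    ¬ EntailsAQ (NegUnionAQ En) O e.2.1 e.2.2 := by
  have hsup : NegUnionAQ En = (En.image Prod.fst).sup id := by
    rw [Finset.sup_image]
    rfl
  rw [hsup]
  refine not_entailsAQ_sup hO hdisj ?_ (Finset.mem_image_of_mem _ he) (hwf e he) (hfit e he)
  simp only [Finset.mem_image]
  rintro _ ⟨e', he', rfl⟩
  exact consistentWith_of_not_entailsAQ (hfit e' he')

theorem exists_completion_of_fitsAQ {Ep En : Finset AQEx}
    (hdisj : PairwiseDisjInds (En.image Prod.fst))
    (hwf : ∀ e ∈ Ep ∪ En, e.2.2 ∈ ABoxInds e.1) {O : Ontology}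
    (hO : OntologyInLang DL.alci O) (hfit : FitsAQ O Ep En) :
    ∃ C : ABox, IsCompletionAQ Ep En C ∧
      (∀ e ∈ Ep, ∀ h : ℕ → ℕ, ABoxHom h e.1 C → Assertion.conc e.2.1 (h e.2.2) ∈ C) ∧
      (∀ e ∈ En, Assertion.conc e.2.1 e.2.2 ∉ C) := by
  refine ⟨entailedCompletion Ep En O, isCompletionAQ_entailedCompletion, ?_, ?_⟩
  · intro e he h hh
    have hha : h e.2.2 ∈ ABoxInds (NegUnionAQ En) :=
      isCompletionAQ_entailedCompletion.ABoxInds_subset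
        (hh.mem_ABoxInds (hwf e (Finset.mem_union_left _ he)))
    refine mem_entailedCompletion.2 (Or.inr ⟨_, _, rfl, hha, ⟨e, he, rfl⟩, ?_⟩)
    exact fun I hIO hI =>
      (hfit.1 e he).of_hom hO hh I hIO (Interp.satABox_entailedCompletion hIO hI)
  · intro e he hmem
    exact not_entailsAQ_negUnionAQ hdisj (fun e he => hwf e (Finset.mem_union_right _ he)) hO
      hfit.2 he (entailsAQ_of_conc_mem_entailedCompletion hmem)

def Concept.disj : List Concept → Concept
  | [] => .neg .top
  | C :: l => .neg (.inter (.neg C) (.neg (disj l)))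

lemma Interp.mem_cSem_disj (I : Interp) (l : List Concept) (d : I.Dom) :
    d ∈ I.cSem (Concept.disj l) ↔ ∃ C ∈ l, d ∈ I.cSem C := by
  induction l with
  | nil => simp [Concept.disj, Interp.cSem]
  | cons C l ih =>
    simp only [Concept.disj, Interp.cSem, Set.mem_compl_iff, Set.mem_inter_iff, ih,
      List.mem_cons, exists_eq_or_imp, not_and_or, not_not]

lemma Concept.disj_invFree {l : List Concept} (h : ∀ C ∈ l, C.invFree) :
    (Concept.disj l).invFree := by
  induction l with
  | nil => exact trivial
  | cons C l ih => exact ⟨h C (by simp), ih fun D hD => h D (by simp [hD])⟩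

lemma Concept.disj_countFree {l : List Concept} (h : ∀ C ∈ l, C.countFree) :
    (Concept.disj l).countFree := by
  induction l with
  | nil => exact trivial
  | cons C l ih => exact ⟨h C (by simp), ih fun D hD => h D (by simp [hD])⟩

/-- The fresh concept name `m + c` marks the elements that play the role of the
individual `c` of a completion. -/
def label (m c : ℕ) : Concept := .atom (m + c)

noncomputable def someLabel (m : ℕ) (s : Finset ℕ) : Concept := .disj (s.toList.map (label m))

lemma Interp.mem_cSem_someLabel (I : Interp) (m : ℕ) (s : Finset ℕ) (d : I.Dom) :
    d ∈ I.cSem (someLabel m s) ↔ ∃ c ∈ s, d ∈ I.concI (m + c) := by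
  simp [someLabel, Interp.mem_cSem_disj, label, Interp.cSem]

def roleSuccs (C : ABox) (r c : ℕ) : Finset ℕ :=
  (ABoxInds C).filter fun c' => Assertion.role r c c' ∈ C

noncomputable def labelOntology (m : ℕ) (C : ABox) (CNs RNs : Finset ℕ) : Ontology :=
  ((ABoxInds C ×ˢ ABoxInds C).filter (fun p => p.1 ≠ p.2)).image
      (fun p => (label m p.1, .neg (label m p.2))) ∪
    CNs.image (fun P => (.atom P, someLabel m (ABoxInds C))) ∪
    RNs.image (fun r => (.ex (.name r) .top, someLabel m (ABoxInds C))) ∪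
    (ABoxInds C ×ˢ CNs).image (fun p => (label m p.1,
      if Assertion.conc p.2 p.1 ∈ C then .atom p.2 else .neg (.atom p.2))) ∪
    (ABoxInds C ×ˢ RNs).image (fun p => (label m p.1,
      .neg (.ex (.name p.2) (.neg (someLabel m (roleSuccs C p.2 p.1))))))

lemma labelOntology_inLang (m : ℕ) (C : ABox) (CNs RNs : Finset ℕ) :
    OntologyInLang DL.alc (labelOntology m C CNs RNs) := by
  have hsome : ∀ s, (someLabel m s).invFree ∧ (someLabel m s).countFree := fun s =>
    ⟨Concept.disj_invFree (by simp [label, Concept.invFree]),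
      Concept.disj_countFree (by simp [label, Concept.countFree])⟩
  simp only [OntologyInLang, labelOntology, Finset.forall_mem_union, Finset.forall_mem_image]
  refine ⟨⟨⟨⟨?_, ?_⟩, ?_⟩, ?_⟩, ?_⟩ <;> intro x _ <;> (try split_ifs) <;>
    simp [label, Concept.invFree, Concept.countFree, hsome]

lemma Interp.mem_cSem_ite_atom (I : Interp) (p : Prop) [Decidable p] (P : ℕ) (d : I.Dom) :
    d ∈ I.cSem (if p then .atom P else .neg (.atom P)) ↔ (d ∈ I.concI P ↔ p) := by
  split_ifs with hp <;> simp [Interp.cSem, hp]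

structure IsLabelModel (I : Interp) (m : ℕ) (C : ABox) (CNs RNs : Finset ℕ) : Prop where
  label_disjoint : ∀ c ∈ ABoxInds C, ∀ c' ∈ ABoxInds C, c ≠ c' →
    ∀ d ∈ I.concI (m + c), d ∉ I.concI (m + c')
  labelled_of_conc : ∀ P ∈ CNs, ∀ d ∈ I.concI P, ∃ c ∈ ABoxInds C, d ∈ I.concI (m + c)
  labelled_of_role : ∀ r ∈ RNs, ∀ d e, (d, e) ∈ I.roleI r →
    ∃ c ∈ ABoxInds C, d ∈ I.concI (m + c)
  conc_iff : ∀ c ∈ ABoxInds C, ∀ P ∈ CNs, ∀ d ∈ I.concI (m + c),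
    d ∈ I.concI P ↔ Assertion.conc P c ∈ C
  role_succ : ∀ c ∈ ABoxInds C, ∀ r ∈ RNs, ∀ d ∈ I.concI (m + c), ∀ e, (d, e) ∈ I.roleI r →
    ∃ c', Assertion.role r c c' ∈ C ∧ e ∈ I.concI (m + c')

lemma Interp.isModelOf_labelOntology {I : Interp} {m : ℕ} {C : ABox} {CNs RNs : Finset ℕ} :
    I.IsModelOf (labelOntology m C CNs RNs) ↔ IsLabelModel I m C CNs RNs := by
  simp only [Interp.IsModelOf, labelOntology, Finset.forall_mem_union, Finset.forall_mem_image,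
    Finset.mem_filter, Finset.mem_product, Prod.forall, Set.subset_def, label, Interp.cSem,
    Interp.mem_cSem_someLabel, Interp.rSem, roleSuccs, Set.mem_compl_iff, Set.mem_ofPred_eq]
  constructor
  · rintro ⟨⟨⟨⟨hdisj, hconc⟩, hrole⟩, hiff⟩, hsucc⟩
    refine ⟨fun c hc c' hc' hne => hdisj c c' ⟨⟨hc, hc'⟩, hne⟩, hconc,
      fun r hr d e hde => hrole hr d ⟨e, hde, trivial⟩,
      fun c hc P hP d hd => (I.mem_cSem_ite_atom _ P d).1 (hiff c P ⟨hc, hP⟩ d hd), ?_⟩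
    intro c hc r hr d hd e hde
    by_contra hno
    exact hsucc c r ⟨hc, hr⟩ d hd ⟨e, hde, fun ⟨c', ⟨_, hcc'⟩, he⟩ => hno ⟨c', hcc', he⟩⟩
  · intro h
    refine ⟨⟨⟨⟨?_, h.labelled_of_conc⟩, ?_⟩, ?_⟩, ?_⟩
    · rintro c c' ⟨⟨hc, hc'⟩, hne⟩
      exact h.label_disjoint c hc c' hc' hne
    · rintro r hr d ⟨e, hde, -⟩
      exact h.labelled_of_role r hr d e hde
    · rintro c P ⟨hc, hP⟩ d hd
      exact (I.mem_cSem_ite_atom _ P d).2 (h.conc_iff c hc P hP d hd)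
    rintro c r ⟨hc, hr⟩ d hd ⟨e, hde, hno⟩
    obtain ⟨c', hcc', he⟩ := h.role_succ c hc r hr d hd e hde
    exact hno ⟨c', ⟨mem_ABoxInds_of_role_right hcc', hcc'⟩, he⟩

namespace IsLabelModel

variable {I : Interp} {m : ℕ} {C : ABox} {CNs RNs : Finset ℕ}

lemma label_unique (hI : IsLabelModel I m C CNs RNs) {c c' : ℕ} (hc : c ∈ ABoxInds C)
    (hc' : c' ∈ ABoxInds C) {d : I.Dom} (hd : d ∈ I.concI (m + c))
    (hd' : d ∈ I.concI (m + c')) : c = c' := by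
  by_contra hne
  exact hI.label_disjoint c hc c' hc' hne d hd hd'

variable {A : ABox}

lemma exists_label (hI : IsLabelModel I m C CNs RNs) (hCN : ABoxCNs A ⊆ CNs)
    (hRN : ABoxRNs A ⊆ RNs) (hA : I.SatABox A) {b : ℕ} (hb : b ∈ ABoxInds A) :
    ∃ c ∈ ABoxInds C, I.indI b ∈ I.concI (m + c) := by
  rcases mem_ABoxInds_iff.1 hb with ⟨P, hP⟩ | ⟨r, b', hr | hr⟩
  · exact hI.labelled_of_conc P (hCN (mem_ABoxCNs hP)) _ (hA _ hP)
  · exact hI.labelled_of_role r (hRN (mem_ABoxRNs hr)) _ _ (hA _ hr)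
  · obtain ⟨c', hc', hb'⟩ := hI.labelled_of_role r (hRN (mem_ABoxRNs hr)) _ _ (hA _ hr)
    obtain ⟨c, hc, hbc⟩ := hI.role_succ c' hc' r (hRN (mem_ABoxRNs hr)) _ hb' _ (hA _ hr)
    exact ⟨c, mem_ABoxInds_of_role_right hc, hbc⟩

lemma exists_hom (hI : IsLabelModel I m C CNs RNs) (hCN : ABoxCNs A ⊆ CNs)
    (hRN : ABoxRNs A ⊆ RNs) (hA : I.SatABox A) :
    ∃ h : ℕ → ℕ, ABoxHom h A C ∧
      ∀ b ∈ ABoxInds A, h b ∈ ABoxInds C ∧ I.indI b ∈ I.concI (m + h b) := by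
  have hlabel : ∀ b, ∃ c, b ∈ ABoxInds A → c ∈ ABoxInds C ∧ I.indI b ∈ I.concI (m + c) := by
    intro b
    by_cases hb : b ∈ ABoxInds A
    · obtain ⟨c, hc⟩ := hI.exists_label hCN hRN hA hb
      exact ⟨c, fun _ => hc⟩
    · exact ⟨0, fun h => absurd h hb⟩
  choose h hh using hlabel
  refine ⟨h, ⟨fun P b hP => ?_, fun r b b' hr => ?_⟩, hh⟩
  · obtain ⟨hc, hbc⟩ := hh b (mem_ABoxInds_of_conc hP)
    exact (hI.conc_iff _ hc P (hCN (mem_ABoxCNs hP)) _ hbc).1 (hA _ hP)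
  · obtain ⟨hc, hbc⟩ := hh b (mem_ABoxInds_of_role_left hr)
    obtain ⟨hc', hbc'⟩ := hh b' (mem_ABoxInds_of_role_right hr)
    obtain ⟨c', hcc', hb'c'⟩ := hI.role_succ _ hc r (hRN (mem_ABoxRNs hr)) _ hbc _ (hA _ hr)
    rwa [hI.label_unique hc' (mem_ABoxInds_of_role_right hcc') hbc' hb'c']

end IsLabelModel

lemma entailsAQ_labelOntology {m : ℕ} {C A : ABox} {CNs RNs : Finset ℕ} {Q a : ℕ}
    (hCN : ABoxCNs A ⊆ CNs) (hRN : ABoxRNs A ⊆ RNs) (hQ : Q ∈ CNs) (ha : a ∈ ABoxInds A)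
    (hpos : ∀ h : ℕ → ℕ, ABoxHom h A C → Assertion.conc Q (h a) ∈ C) :
    EntailsAQ A (labelOntology m C CNs RNs) Q a := by
  intro I hIO hIA
  have hI := Interp.isModelOf_labelOntology.1 hIO
  obtain ⟨h, hh, hlabel⟩ := hI.exists_hom hCN hRN hIA
  obtain ⟨hc, hac⟩ := hlabel a ha
  exact (hI.conc_iff _ hc Q hQ _ hac).2 (hpos h hh)

/-- `C` as an interpretation of the individual names, in which a concept name `m + c` is the
label `{c}`. -/
def labelInterp (m : ℕ) (C : ABox) : Interp where
  Dom := ℕ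
  indI := id
  indI_inj := Function.injective_id
  concI n := if n < m then {d | Assertion.conc n d ∈ C} else {n - m}
  roleI r := {p | Assertion.role r p.1 p.2 ∈ C}

section labelInterp

variable {m : ℕ} {C : ABox}

lemma labelInterp_concI_of_lt {P : ℕ} (h : P < m) :
    (labelInterp m C).concI P = {d | Assertion.conc P d ∈ C} :=
  if_pos h

lemma mem_labelInterp_label {c d : ℕ} : d ∈ (labelInterp m C).concI (m + c) ↔ d = c := by
  simp only [labelInterp, Nat.not_lt.2 (Nat.le_add_right m c), if_false, Nat.add_sub_cancel_left]
  exact Set.mem_singleton_iff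

lemma isLabelModel_labelInterp {CNs : Finset ℕ} (hCN : ∀ P ∈ CNs, P < m) (RNs : Finset ℕ) :
    IsLabelModel (labelInterp m C) m C CNs RNs where
  label_disjoint c _ c' _ hne d hd hd' :=
    hne ((mem_labelInterp_label.1 hd).symm.trans (mem_labelInterp_label.1 hd'))
  labelled_of_conc P hP d hd := by
    rw [labelInterp_concI_of_lt (hCN P hP)] at hd
    exact ⟨d, mem_ABoxInds_of_conc hd, mem_labelInterp_label.2 rfl⟩
  labelled_of_role r _ d e hde :=
    ⟨d, mem_ABoxInds_of_role_left (b := e) hde, mem_labelInterp_label.2 rfl⟩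
  conc_iff c _ P hP d hd := by
    obtain rfl := mem_labelInterp_label.1 hd
    rw [labelInterp_concI_of_lt (hCN P hP)]
    rfl
  role_succ c _ r _ d hd e hde := by
    obtain rfl := mem_labelInterp_label.1 hd
    exact ⟨e, hde, mem_labelInterp_label.2 rfl⟩

lemma satABox_labelInterp {A : ABox} (hA : A ⊆ C) (hm : ∀ P ∈ ABoxCNs C, P < m) :
    (labelInterp m C).SatABox A := by
  rintro (⟨P, a⟩ | ⟨r, a, b⟩) hα
  · show a ∈ (labelInterp m C).concI P
    rw [labelInterp_concI_of_lt (hm P (mem_ABoxCNs (hA hα)))]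
    exact hA hα
  · exact hA hα

end labelInterp

theorem exists_fitsAQ_of_completion {Ep En : Finset AQEx}
    (hwf : ∀ e ∈ Ep, e.2.2 ∈ ABoxInds e.1) {C : ABox} (hC : NegUnionAQ En ⊆ C)
    (hpos : ∀ e ∈ Ep, ∀ h : ℕ → ℕ, ABoxHom h e.1 C → Assertion.conc e.2.1 (h e.2.2) ∈ C)
    (hneg : ∀ e ∈ En, Assertion.conc e.2.1 e.2.2 ∉ C) :
    ∃ O : Ontology, OntologyInLang DL.alc O ∧ FitsAQ O Ep En := by
  let CNs := Ep.biUnion fun e => insert e.2.1 (ABoxCNs e.1)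
  let RNs := Ep.biUnion fun e => ABoxRNs e.1
  -- the labels `m + c` must be fresh for every name that `labelInterp m C` reads off `C`
  obtain ⟨m, hm⟩ := Finset.exists_nat_subset_range (CNs ∪ ABoxCNs C ∪ En.image (·.2.1))
  have hlt : ∀ P ∈ CNs ∪ ABoxCNs C ∪ En.image (·.2.1), P < m := fun P hP =>
    Finset.mem_range.1 (hm hP)
  refine ⟨labelOntology m C CNs RNs, labelOntology_inLang m C CNs RNs, fun e he => ?_,
    fun e he hE => ?_⟩
  · refine entailsAQ_labelOntology (fun P hP => ?_) (fun r hr => ?_) ?_ (hwf e he) (hpos e he)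
    · exact Finset.mem_biUnion.2 ⟨e, he, Finset.mem_insert_of_mem hP⟩
    · exact Finset.mem_biUnion.2 ⟨e, he, hr⟩
    · exact Finset.mem_biUnion.2 ⟨e, he, Finset.mem_insert_self _ _⟩
  · have hCmodel : IsLabelModel (labelInterp m C) m C CNs RNs :=
      isLabelModel_labelInterp (fun P hP => hlt P (by simp [hP])) RNs
    have hQ := hE (labelInterp m C) (Interp.isModelOf_labelOntology.2 hCmodel)
      (satABox_labelInterp ((Finset.le_sup (f := Prod.fst) he).trans hC)
        (fun P hP => hlt P (by simp [hP])))
    have hQm : e.2.1 < m := hlt _ (Finset.mem_union_right _ (Finset.mem_image_of_mem _ he))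
    rw [labelInterp_concI_of_lt hQm] at hQ
    exact hneg e he hQ

/-- Characterization of fitting existence for ABox-AQ examples
via completions. -/
theorem aq_fitting_characterization (L : DL) (Ep En : Finset AQEx)
    (hdisj : PairwiseDisjInds ((Ep ∪ En).image Prod.fst))
    (hwf : ∀ e ∈ Ep ∪ En, e.2.2 ∈ ABoxInds e.1) :
    (∃ O : Ontology, OntologyInLang L O ∧ FitsAQ O Ep En) ↔
      (∃ C : ABox, IsCompletionAQ Ep En C ∧
        (∀ e ∈ Ep, ∀ h : ℕ → ℕ, ABoxHom h e.1 C →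
          Assertion.conc e.2.1 (h e.2.2) ∈ C) ∧
        (∀ e ∈ En, Assertion.conc e.2.1 e.2.2 ∉ C)) := by
  constructor
  · rintro ⟨O, hO, hfit⟩
    exact exists_completion_of_fitsAQ
      (hdisj.mono (Finset.image_subset_image Finset.subset_union_right)) hwf hO.toALCI hfit
  · rintro ⟨C, hC, hpos, hneg⟩
    obtain ⟨O, hO, hfit⟩ :=
      exists_fitsAQ_of_completion (fun e he => hwf e (Finset.mem_union_left _ he)) hC.1 hpos hneg
    exact ⟨O, hO.ofALC L, hfit⟩

end DLFit
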